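/- Let η be a finite connected graph with spanning tree η₀ and let ε₁ be the set of edges of η not in η₀. Suppose the SO(d)-voltage α satisfies α_{ij} = I on all edges of η₀. Then the kernel of the gauged Laplacian Δ_{η,κ,α} is isomorphic to ℝ^d if ε₁ = ∅, and otherwise to the intersection over edges (i,j) ∈ ε₁ of the eigenspaces E₁(α_{ij}) of α_{ij} to eigenvalue 1; the isomorphism sends a kernel element x (which is a constant function x_i = x₀) to x₀. -/

import Mathlib

/-!
A kernel element `x` of the gauged Laplacian satisfies `∑ⱼ κᵢⱼ (αᵢⱼ xⱼ − xᵢ) = 0` at every vertex.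
Pairing with `xᵢ` and summing, orthogonality of the `αᵢⱼ` and symmetry of `κ` turn this into
`∑ᵢⱼ κᵢⱼ ‖αᵢⱼ xⱼ − xᵢ‖² = 0`, so `αᵢⱼ xⱼ = xᵢ` along every edge. On the spanning tree `αᵢⱼ = 1`,
hence `x` is constant, and on the remaining edges its value must then be fixed by `αᵢⱼ`;
conversely every such constant lies in the kernel.
-/

open Matrix

/-- The gauged Laplacian `(Δ x)_i = −Σ_j (κ_{ij}/Z_i)(α_{ij} x_j − x_i)`,
with `Z_i = Σ_j κ_{ij}`, as a linear operator on `ν → ℝ^d`. -/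
noncomputable def gaugedLapL {ν : Type*} [Fintype ν] (d : ℕ)
    (κ : ν → ν → ℝ) (α : ν → ν → Matrix (Fin d) (Fin d) ℝ) :
    (ν → Fin d → ℝ) →ₗ[ℝ] (ν → Fin d → ℝ) where
  toFun x := fun i => -∑ j, (κ i j / ∑ k, κ i k) • ((α i j).mulVec (x j) - x i)
  map_add' x y := by
    funext i
    simp only [Pi.add_apply, Matrix.mulVec_add]
    rw [← neg_add, ← Finset.sum_add_distrib]
    congr 1
    refine Finset.sum_congr rfl fun j _ => ?_
    rw [← smul_add]
    congr 1
    abel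
  map_smul' c x := by
    funext i
    simp only [Pi.smul_apply, RingHom.id_apply]
    rw [smul_neg, Finset.smul_sum]
    congr 1
    refine Finset.sum_congr rfl fun j _ => ?_
    rw [Matrix.mulVec_smul, ← smul_sub, smul_comm]

theorem Matrix.mulVec_sub_dotProduct_self_of_mul_transpose_eq_one {n R : Type*} [Fintype n]
    [DecidableEq n] [CommRing R] {A : Matrix n n R}
    (hA : A * Aᵀ = 1) (u v : n → R) :
    (A *ᵥ v - u) ⬝ᵥ (A *ᵥ v - u) = v ⬝ᵥ v + u ⬝ᵥ u - 2 * (u ⬝ᵥ A *ᵥ v) := by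
  have hAv : A *ᵥ v ⬝ᵥ A *ᵥ v = v ⬝ᵥ v := by
    rw [dotProduct_mulVec, ← mulVec_transpose, mulVec_mulVec, mul_eq_one_comm.mp hA,
      one_mulVec, dotProduct_comm]
  rw [sub_dotProduct, dotProduct_sub, dotProduct_sub, hAv, dotProduct_comm (A *ᵥ v) u]
  ring

theorem Matrix.mem_iInf_eigenspace_mulVecLin_one_iff {ι n R : Type*} [Fintype n] [CommRing R]
    (P : ι → Prop) (A : ι → Matrix n n R) (v : n → R) :
    v ∈ (⨅ (p : ι) (_ : P p), Module.End.eigenspace (mulVecLin (A p)) 1 : Submodule R (n → R))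
      ↔ ∀ p, P p → A p *ᵥ v = v := by
  simp only [Submodule.mem_iInf, Module.End.mem_eigenspace_iff, mulVecLin_apply, one_smul]

theorem Submodule.exists_linearEquiv_apply_eq_of_mem_iff {R M ν : Type*} [Semiring R]
    [AddCommMonoid M] [Module R M] [Nonempty ν] (K : Submodule R (ν → M)) (S : Submodule R M)
    (hK : ∀ x, x ∈ K ↔ (∀ i j, x i = x j) ∧ ∀ i, x i ∈ S) :
    ∃ e : K ≃ₗ[R] S, ∀ x i, (e x : M) = (x : ν → M) i := by
  let i₀ := Classical.arbitrary ν
  let e : K ≃ₗ[R] S :=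
    { toFun x := ⟨x.1 i₀, ((hK x).1 x.2).2 i₀⟩
      map_add' _ _ := rfl
      map_smul' _ _ := rfl
      invFun v := ⟨fun _ => v, (hK _).2 ⟨fun _ _ => rfl, fun _ => v.2⟩⟩
      left_inv x := Subtype.ext (funext fun i => ((hK x).1 x.2).1 i₀ i)
      right_inv _ := rfl }
  exact ⟨e, fun x i => ((hK x).1 x.2).1 i₀ i⟩

theorem SimpleGraph.Reachable.eq_of_forall_adj {V β : Type*} {H : SimpleGraph V} {f : V → β}
    (hf : ∀ i j, H.Adj i j → f i = f j) {u v : V} (huv : H.Reachable u v) : f u = f v := by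
  obtain ⟨w⟩ := huv
  induction w with
  | nil => rfl
  | cons hadj _ ih => exact (hf _ _ hadj).trans ih

section Energy

variable {ν n R : Type*} [Fintype ν] [Fintype n] [CommRing R]

def gaugedEnergy (κ : ν → ν → R) (α : ν → ν → Matrix n n R) (x : ν → n → R) : R :=
  ∑ i, ∑ j, κ i j * ((α i j *ᵥ x j - x i) ⬝ᵥ (α i j *ᵥ x j - x i))

theorem gaugedEnergy_eq [DecidableEq n] {κ : ν → ν → R} (hκsym : ∀ i j, κ i j = κ j i)
    {α : ν → ν → Matrix n n R} (hortho : ∀ i j, α i j * (α i j)ᵀ = 1) (x : ν → n → R) :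
    gaugedEnergy κ α x = -2 * ∑ i, x i ⬝ᵥ ∑ j, κ i j • (α i j *ᵥ x j - x i) := by
  have hswap : ∑ i, ∑ j, κ i j * (x j ⬝ᵥ x j) = ∑ i, ∑ j, κ i j * (x i ⬝ᵥ x i) := by
    rw [Finset.sum_comm]
    simp only [hκsym _ _]
  calc gaugedEnergy κ α x
      = ∑ i, ∑ j, (κ i j * (x j ⬝ᵥ x j) - κ i j * (x i ⬝ᵥ x i)
          + -2 * (κ i j * (x i ⬝ᵥ α i j *ᵥ x j - x i ⬝ᵥ x i))) := by
        refine Finset.sum_congr rfl fun i _ => Finset.sum_congr rfl fun j _ => ?_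
        rw [mulVec_sub_dotProduct_self_of_mul_transpose_eq_one (hortho i j)]
        ring
    _ = -2 * ∑ i, x i ⬝ᵥ ∑ j, κ i j • (α i j *ᵥ x j - x i) := by
        simp only [Finset.sum_add_distrib, Finset.sum_sub_distrib, hswap, sub_self, zero_add,
          Finset.mul_sum, dotProduct_sum, dotProduct_smul, dotProduct_sub, smul_eq_mul]

theorem mulVec_eq_of_gaugedEnergy_eq_zero [LinearOrder R] [IsStrictOrderedRing R]
    {κ : ν → ν → R} (hκnn : ∀ i j, 0 ≤ κ i j) {α : ν → ν → Matrix n n R} {x : ν → n → R}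
    (h : gaugedEnergy κ α x = 0) {i j : ν} (hij : 0 < κ i j) : α i j *ᵥ x j = x i := by
  have hterm_nonneg : ∀ i j, 0 ≤ κ i j * ((α i j *ᵥ x j - x i) ⬝ᵥ (α i j *ᵥ x j - x i)) :=
    fun i j => mul_nonneg (hκnn i j) (Finset.sum_nonneg fun k _ => mul_self_nonneg _)
  have hterm : κ i j * ((α i j *ᵥ x j - x i) ⬝ᵥ (α i j *ᵥ x j - x i)) = 0 :=
    (Finset.sum_eq_zero_iff_of_nonneg fun j _ => hterm_nonneg i j).mp
      ((Finset.sum_eq_zero_iff_of_nonneg fun i _ => Finset.sum_nonneg fun j _ =>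
        hterm_nonneg i j).mp h i (Finset.mem_univ i)) j (Finset.mem_univ j)
  rw [mul_eq_zero, dotProduct_self_eq_zero, sub_eq_zero] at hterm
  exact hterm.resolve_left hij.ne'

end Energy

section Laplacian

variable {ν : Type*} [Fintype ν] {d : ℕ} {κ : ν → ν → ℝ} {α : ν → ν → Matrix (Fin d) (Fin d) ℝ}

theorem gaugedLapL_apply (x : ν → Fin d → ℝ) (i : ν) :
    gaugedLapL d κ α x i = -((∑ k, κ i k)⁻¹ • ∑ j, κ i j • (α i j *ᵥ x j - x i)) := by
  simp only [gaugedLapL, LinearMap.coe_mk, AddHom.coe_mk, Finset.smul_sum, smul_smul,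
    div_eq_inv_mul]

theorem sum_smul_mulVec_sub_eq_zero_of_gaugedLapL_eq_zero (hκnn : ∀ i j, 0 ≤ κ i j)
    {x : ν → Fin d → ℝ} (hx : gaugedLapL d κ α x = 0) (i : ν) :
    ∑ j, κ i j • (α i j *ᵥ x j - x i) = 0 := by
  have hi := congrFun hx i
  rw [gaugedLapL_apply, Pi.zero_apply, neg_eq_zero, smul_eq_zero, inv_eq_zero,
    Finset.sum_eq_zero_iff_of_nonneg fun j _ => hκnn i j] at hi
  -- At an isolated vertex `Zᵢ = 0`, so `(Δx)ᵢ = 0` holds through the junk value `0⁻¹ = 0`.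
  rcases hi with hκ | hsum
  · simp [hκ _ (Finset.mem_univ _)]
  · exact hsum

theorem gaugedLapL_eq_zero_iff (hκsym : ∀ i j, κ i j = κ j i) (hκnn : ∀ i j, 0 ≤ κ i j)
    (hortho : ∀ i j, α i j * (α i j)ᵀ = 1) (x : ν → Fin d → ℝ) :
    gaugedLapL d κ α x = 0 ↔ ∀ i j, 0 < κ i j → α i j *ᵥ x j = x i := by
  constructor
  · intro hx i j hij
    have henergy : gaugedEnergy κ α x = 0 := by
      simp [gaugedEnergy_eq hκsym hortho,
        sum_smul_mulVec_sub_eq_zero_of_gaugedLapL_eq_zero hκnn hx]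
    exact mulVec_eq_of_gaugedEnergy_eq_zero hκnn henergy hij
  · intro hpar
    funext i
    rw [gaugedLapL_apply, Pi.zero_apply, neg_eq_zero]
    refine smul_eq_zero_of_right _ (Finset.sum_eq_zero fun j _ => ?_)
    rcases (hκnn i j).eq_or_lt with hzero | hpos
    · rw [← hzero, zero_smul]
    · rw [hpar i j hpos, sub_self, smul_zero]

end Laplacian

theorem forall_adj_mulVec_eq_iff {ν n R : Type*} [Fintype n] [DecidableEq n] [CommRing R]
    {G η₀ : SimpleGraph ν} (hsub : η₀ ≤ G) (hη₀ : η₀.Connected) {α : ν → ν → Matrix n n R}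
    (hα : ∀ i j, η₀.Adj i j → α i j = 1) (x : ν → n → R) :
    (∀ i j, G.Adj i j → α i j *ᵥ x j = x i) ↔
      (∀ i j, x i = x j) ∧ ∀ i, x i ∈ (⨅ (p : ν × ν) (_ : G.Adj p.1 p.2 ∧ ¬ η₀.Adj p.1 p.2),
        Module.End.eigenspace (mulVecLin (α p.1 p.2)) 1 : Submodule R (n → R)) := by
  simp only [mem_iInf_eigenspace_mulVecLin_one_iff]
  constructor
  · intro hpar
    have hconst : ∀ i j, x i = x j := fun i j =>
      (hη₀.preconnected i j).eq_of_forall_adj fun a b hab => by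
        simpa only [hα a b hab, one_mulVec] using (hpar a b (hsub hab)).symm
    refine ⟨hconst, fun i p hp => ?_⟩
    simpa only [hconst p.1 i, hconst p.2 i] using hpar p.1 p.2 hp.1
  · rintro ⟨hconst, hfix⟩ i j hij
    by_cases hη : η₀.Adj i j
    · rw [hα i j hη, one_mulVec, hconst]
    · rw [hfix j (i, j) ⟨hij, hη⟩, hconst]

theorem stmt11_general {ν : Type*} [Fintype ν] (d : ℕ)
    (G : SimpleGraph ν)
    (η₀ : SimpleGraph ν) (hsub : η₀ ≤ G) (htree : η₀.IsTree)
    (κ : ν → ν → ℝ)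
    (hκsym : ∀ i j, κ i j = κ j i)
    (hκnn : ∀ i j, 0 ≤ κ i j)
    (hsupp : ∀ i j, 0 < κ i j ↔ G.Adj i j)
    (α : ν → ν → Matrix (Fin d) (Fin d) ℝ)
    (hortho : ∀ i j, α i j * (α i j)ᵀ = 1)
    (htreeId : ∀ i j, η₀.Adj i j → α i j = 1) :
    ∃ e : LinearMap.ker (gaugedLapL d κ α) ≃ₗ[ℝ]
        ((⨅ (p : ν × ν) (_ : G.Adj p.1 p.2 ∧ ¬ η₀.Adj p.1 p.2),
          Module.End.eigenspace (Matrix.mulVecLin (α p.1 p.2)) 1 :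
            Submodule ℝ (Fin d → ℝ))),
      ∀ (x : LinearMap.ker (gaugedLapL d κ α)) (i : ν),
        (e x : Fin d → ℝ) = (x : ν → Fin d → ℝ) i := by
  have : Nonempty ν := htree.connected.nonempty
  refine Submodule.exists_linearEquiv_apply_eq_of_mem_iff _ _ fun x => ?_
  rw [LinearMap.mem_ker, gaugedLapL_eq_zero_iff hκsym hκnn hortho]
  simp only [hsupp]
  exact forall_adj_mulVec_eq_iff hsub htree.connected htreeId x

/-- For a spanning tree `η₀` of a finite connected graph `η` and an
`SO(d)`-voltage `α` equal to the identity on all edges of `η₀`, the kernel of the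
gauged Laplacian is isomorphic to the intersection, over the edges `(i,j)` of `η`
not in `η₀`, of the eigenspaces `E₁(α_{ij})` (which is all of `ℝ^d` when there are
no such edges); the isomorphism sends a kernel element `x` (a constant function
`x_i = x₀`) to `x₀`. -/
theorem stmt11 {ν : Type*} [Fintype ν] (d : ℕ)
    (G : SimpleGraph ν) (hconn : G.Connected)
    (η₀ : SimpleGraph ν) (hsub : η₀ ≤ G) (htree : η₀.IsTree)
    (κ : ν → ν → ℝ)
    (hκsym : ∀ i j, κ i j = κ j i)
    (hκnn : ∀ i j, 0 ≤ κ i j)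
    (hsupp : ∀ i j, 0 < κ i j ↔ G.Adj i j)
    (α : ν → ν → Matrix (Fin d) (Fin d) ℝ)
    (hortho : ∀ i j, α i j * (α i j)ᵀ = 1)
    (hdet : ∀ i j, (α i j).det = 1)
    (hinv : ∀ i j, α j i = (α i j)ᵀ)
    (htreeId : ∀ i j, η₀.Adj i j → α i j = 1) :
    ∃ e : LinearMap.ker (gaugedLapL d κ α) ≃ₗ[ℝ]
        ((⨅ (p : ν × ν) (_ : G.Adj p.1 p.2 ∧ ¬ η₀.Adj p.1 p.2),
          Module.End.eigenspace (Matrix.mulVecLin (α p.1 p.2)) 1 :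
            Submodule ℝ (Fin d → ℝ))),
      ∀ (x : LinearMap.ker (gaugedLapL d κ α)) (i : ν),
        (e x : Fin d → ℝ) = (x : ν → Fin d → ℝ) i :=
  stmt11_general d G η₀ hsub htree κ hκsym hκnn hsupp α hortho htreeId
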